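/- For every site r : Fin L, the bosonic anyons at one site satisfy the q-deformed oscillator algebra: A(r)A†(r) − q A†(r)A(r) = q^{−n'(r)} and A(r)A†(r) − q⁻¹ A†(r)A(r) = q^{n'(r)}. -/
import Mathlib


/-!
Bosonic anyons on a one-dimensional lattice `Fin L`, built from `q`-deformed
bosonic oscillators on the bosonic Fock space `(Fin L → ℕ) →₀ ℂ` and disorder factors.
-/

noncomputable section

/-- The bosonic Fock space on a lattice of `L` sites. -/
abbrev BSpace (L : ℕ) : Type := (Fin L → ℕ) →₀ ℂ

/-- The `q`-integer `[x]_q = (q^x − q^{−x})/(q − q⁻¹)`. -/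
def qInt (q : ℂ) (x : ℤ) : ℂ := (q ^ x - q ^ (-x)) / (q - q⁻¹)

/-- The `q`-deformed bosonic annihilation operator
`b(r) : |g⟩ ↦ s(g r) |g[r ↦ g r − 1]⟩` (zero if `g r = 0`). -/
def bAnn {L : ℕ} (s : ℤ → ℂ) (r : Fin L) : Module.End ℂ (BSpace L) :=
  Finsupp.lift (BSpace L) ℂ (Fin L → ℕ) fun g =>
    if g r = 0 then 0
    else s (g r) • Finsupp.single (Function.update g r (g r - 1)) (1 : ℂ)

/-- The `q`-deformed bosonic creation operator
`b†(r) : |g⟩ ↦ s(g r + 1) |g[r ↦ g r + 1]⟩`. -/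
def bCre {L : ℕ} (s : ℤ → ℂ) (r : Fin L) : Module.End ℂ (BSpace L) :=
  Finsupp.lift (BSpace L) ℂ (Fin L → ℕ) fun g =>
    s ((g r : ℤ) + 1) • Finsupp.single (Function.update g r (g r + 1)) (1 : ℂ)

/-- The exponent `Σ_t ε(t−r) g(t)`, where `ε` is the sign function. -/
def bExp {L : ℕ} (r : Fin L) (g : Fin L → ℕ) : ℤ :=
  ∑ t : Fin L, Int.sign (((t : ℕ) : ℤ) - ((r : ℕ) : ℤ)) * (g t : ℤ)

/-- The disorder operator `K'⁺(r) : |g⟩ ↦ p^{Σ_t ε(t−r) g(t)} |g⟩`. -/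
def K'plus {L : ℕ} (p : ℂ) (r : Fin L) : Module.End ℂ (BSpace L) :=
  Finsupp.lift (BSpace L) ℂ (Fin L → ℕ) fun g =>
    (p ^ bExp r g) • Finsupp.single g (1 : ℂ)

/-- The disorder operator `K'⁻(r) : |g⟩ ↦ p^{−Σ_t ε(t−r) g(t)} |g⟩`. -/
def K'minus {L : ℕ} (p : ℂ) (r : Fin L) : Module.End ℂ (BSpace L) :=
  Finsupp.lift (BSpace L) ℂ (Fin L → ℕ) fun g =>
    (p ^ (-bExp r g)) • Finsupp.single g (1 : ℂ)

/-- The bosonic anyonic oscillator `A(r) = K'⁺(r) ∘ b(r)`. -/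
def AAnn {L : ℕ} (p : ℂ) (s : ℤ → ℂ) (r : Fin L) : Module.End ℂ (BSpace L) :=
  K'plus p r * bAnn s r

/-- The bosonic anyonic oscillator `A†(r) = K'⁻(r) ∘ b†(r)`. -/
def ACre {L : ℕ} (p : ℂ) (s : ℤ → ℂ) (r : Fin L) : Module.End ℂ (BSpace L) :=
  K'minus p r * bCre s r

/-- The diagonal operator `q^{σ·n'(r)} : |g⟩ ↦ q^{σ·g(r)} |g⟩`. -/
def qPowN {L : ℕ} (q : ℂ) (σ : ℤ) (r : Fin L) : Module.End ℂ (BSpace L) :=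
  Finsupp.lift (BSpace L) ℂ (Fin L → ℕ) fun g =>
    (q ^ (σ * (g r : ℤ))) • Finsupp.single g (1 : ℂ)


section Aux

lemma lift_single {L : ℕ} (f : (Fin L → ℕ) → BSpace L) (g : Fin L → ℕ) :
    Finsupp.lift (BSpace L) ℂ (Fin L → ℕ) f (Finsupp.single g 1) = f g := by
  simp [Finsupp.lift_apply, Finsupp.sum_single_index]

lemma bExp_update {L : ℕ} (r : Fin L) (g : Fin L → ℕ) (m : ℕ) :
    bExp r (Function.update g r m) = bExp r g := by
  unfold bExp
  refine Finset.sum_congr rfl fun t _ => ?_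
  rcases eq_or_ne t r with h | h
  · subst h; simp
  · rw [Function.update_of_ne h]

lemma key1 (q : ℂ) (hq0 : q ≠ 0) (hq1 : q - q⁻¹ ≠ 0) (n : ℤ) :
    qInt q (n + 1) - q * qInt q n = q ^ (-n) := by
  have ha : q ^ n ≠ 0 := zpow_ne_zero _ hq0
  rw [qInt, qInt, ← mul_div_assoc, ← sub_div, div_eq_iff hq1, zpow_add_one₀ hq0,
    neg_add, zpow_add₀ hq0, zpow_neg q n, zpow_neg_one]
  field_simp
  ring

lemma key2 (q : ℂ) (hq0 : q ≠ 0) (hq1 : q - q⁻¹ ≠ 0) (n : ℤ) :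
    qInt q (n + 1) - q⁻¹ * qInt q n = q ^ n := by
  have ha : q ^ n ≠ 0 := zpow_ne_zero _ hq0
  rw [qInt, qInt, ← mul_div_assoc, ← sub_div, div_eq_iff hq1, zpow_add_one₀ hq0,
    neg_add, zpow_add₀ hq0, zpow_neg q n, zpow_neg_one]
  field_simp
  ring

lemma bCre_single {L : ℕ} (s : ℤ → ℂ) (r : Fin L) (g : Fin L → ℕ) :
    bCre s r (Finsupp.single g 1) =
      s ((g r : ℤ) + 1) • Finsupp.single (Function.update g r (g r + 1)) 1 :=
  lift_single _ g

lemma bAnn_single {L : ℕ} (s : ℤ → ℂ) (r : Fin L) (g : Fin L → ℕ) (h : g r ≠ 0) :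
    bAnn s r (Finsupp.single g 1) =
      s (g r) • Finsupp.single (Function.update g r (g r - 1)) 1 := by
  rw [bAnn, lift_single, if_neg h]

lemma Kplus_single {L : ℕ} (p : ℂ) (r : Fin L) (g : Fin L → ℕ) :
    K'plus p r (Finsupp.single g 1) = p ^ bExp r g • Finsupp.single g 1 :=
  lift_single _ g

lemma Kminus_single {L : ℕ} (p : ℂ) (r : Fin L) (g : Fin L → ℕ) :
    K'minus p r (Finsupp.single g 1) = p ^ (-bExp r g) • Finsupp.single g 1 :=
  lift_single _ g

lemma AAnn_ACre_single {L : ℕ} (p : ℂ) (hp : p ≠ 0) (q : ℂ) (hq : q = p ^ 2)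
    (s : ℤ → ℂ) (hs : ∀ n : ℤ, s n ^ 2 = qInt q n) (r : Fin L) (g : Fin L → ℕ) :
    (AAnn p s r * ACre p s r) (Finsupp.single g 1) =
      qInt q ((g r : ℤ) + 1) • Finsupp.single g 1 := by
  have hupd : Function.update g r (g r + 1) r = g r + 1 := Function.update_self r _ g
  have hupd2 : Function.update (Function.update g r (g r + 1)) r (g r) = g := by
    rw [Function.update_idem, Function.update_eq_self]
  rw [Module.End.mul_apply, AAnn, ACre, Module.End.mul_apply, Module.End.mul_apply,
    bCre_single, map_smul, Kminus_single, bExp_update, map_smul, map_smul, map_smul,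
    map_smul, bAnn_single _ _ _ (by rw [hupd]; exact Nat.succ_ne_zero _)]
  simp only [hupd, Nat.add_sub_cancel, hupd2]
  rw [map_smul, Kplus_single, smul_smul, smul_smul, smul_smul]
  congr 1
  have hcast : ((g r + 1 : ℕ) : ℤ) = (g r : ℤ) + 1 := by push_cast; ring
  have hpE : p ^ (-bExp r g) * p ^ bExp r g = 1 := by
    rw [← zpow_add₀ hp]; simp
  rw [hcast, ← hs ((g r : ℤ) + 1), sq]
  linear_combination s ((g r:ℤ)+1) * s ((g r:ℤ)+1) * hpE

lemma ACre_AAnn_single {L : ℕ} (p : ℂ) (hp : p ≠ 0) (q : ℂ) (hq : q = p ^ 2)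
    (s : ℤ → ℂ) (hs : ∀ n : ℤ, s n ^ 2 = qInt q n) (r : Fin L) (g : Fin L → ℕ) :
    (ACre p s r * AAnn p s r) (Finsupp.single g 1) =
      qInt q (g r : ℤ) • Finsupp.single g 1 := by
  rw [Module.End.mul_apply, AAnn, ACre, Module.End.mul_apply, Module.End.mul_apply]
  rcases Nat.eq_zero_or_pos (g r) with h0 | hpos
  · rw [bAnn, lift_single, if_pos h0, h0]
    simp [qInt]
  · obtain ⟨k, hgr⟩ : ∃ k, g r = k + 1 := ⟨(g r) - 1, by omega⟩
    have h1 : Function.update g r k r = k := Function.update_self r k g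
    have hupd2 : Function.update (Function.update g r k) r (k + 1) = g := by
      rw [Function.update_idem, ← hgr, Function.update_eq_self]
    have hupd : Function.update g r (g r - 1) = Function.update g r k := by
      rw [hgr]; rfl
    rw [bAnn_single _ _ _ (by omega), hupd, map_smul, Kplus_single, bExp_update,
      map_smul, map_smul, map_smul, map_smul, bCre_single]
    simp only [h1, hupd2]
    rw [map_smul, Kminus_single, smul_smul, smul_smul, smul_smul]
    congr 1
    have hcast : ((g r : ℕ) : ℤ) = (k : ℤ) + 1 := by rw [hgr]; push_cast; ring
    have hpE : p ^ (-bExp r g) * p ^ bExp r g = 1 := by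
      rw [← zpow_add₀ hp]; simp
    rw [← hs ((g r : ℤ)), sq, hcast]
    linear_combination s ((k:ℤ)+1) * s ((k:ℤ)+1) * hpE

end Aux

/-- the bosonic anyons at one site satisfy the `q`-deformed
oscillator algebra. -/
theorem bosonic_anyon_same_site (L : ℕ) (hL : 1 ≤ L) (p : ℂ) (hp : p ≠ 0)
    (hp4 : p ^ 4 ≠ 1) (q : ℂ) (hq : q = p ^ 2)
    (s : ℤ → ℂ) (hs : ∀ n : ℤ, s n ^ 2 = qInt q n) (r : Fin L) :
    AAnn p s r * ACre p s r - q • (ACre p s r * AAnn p s r) = qPowN q (-1) r ∧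
    AAnn p s r * ACre p s r - q⁻¹ • (ACre p s r * AAnn p s r) = qPowN q 1 r := by
  have hq0 : q ≠ 0 := by rw [hq]; exact pow_ne_zero _ hp
  have hq1 : q - q⁻¹ ≠ 0 := by
    intro h
    apply hp4
    have hqq : q * q = 1 := by
      have : q = q⁻¹ := by linear_combination h
      calc q * q = q * q⁻¹ := by rw [← this]
        _ = 1 := mul_inv_cancel₀ hq0
    calc p ^ 4 = q * q := by rw [hq]; ring
      _ = 1 := hqq
  constructor <;>
  · refine Finsupp.lhom_ext' fun g => LinearMap.ext_ring ?_
    simp only [LinearMap.comp_apply, Finsupp.lsingle_apply, LinearMap.sub_apply,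
      LinearMap.smul_apply]
    rw [AAnn_ACre_single p hp q hq s hs, ACre_AAnn_single p hp q hq s hs,
      qPowN, lift_single, smul_smul, ← sub_smul]
    congr 1
    first
      | rw [key1 q hq0 hq1 (g r : ℤ)]; norm_num
      | rw [key2 q hq0 hq1 (g r : ℤ)]; norm_num

end
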